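/- arXiv:0801.2530 — 4 statements merged into one kernel-verified Lean document; each statement's English description precedes it below -/
import Mathlib

section
/- Let f be an expansive homeomorphism of a compact metric space M with expansivity constant r₀ > 0 (i.e., if d(fⁿx, fⁿy) < r₀ for all n ∈ ℤ then x = y). Let P be a finite collection of pairwise disjoint open sets whose union is dense in M, each of diameter strictly less than r₀. Then for every sequence A ∈ Σ(f,P) := {A ∈ P^ℤ : for all n ≤ m, A_n ∩ f⁻¹A_{n+1} ∩ … ∩ f^{-(m-n)}A_m ≠ ∅}, the intersection ⋂_{n∈ℤ} f⁻ⁿ(closure A_n) consists of exactly one point. -/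
/-! Each set `f⁻ⁿ(closure A_n)` is closed, and any finite family of them contains the
image under a power of `f` of a point of a nonempty cylinder, so compactness gives a point in
the whole intersection. Two such points have orbits staying within `diam A_n < r₀` of each
other, hence coincide by expansivity. -/

open Set

theorem Equiv.Perm.continuous_zpow {X : Type*} [TopologicalSpace X] {f : Equiv.Perm X}
    (hf : Continuous f) (hf' : Continuous f.symm) : ∀ n : ℤ, Continuous ⇑(f ^ n)
  | (n : ℕ) => by simpa only [zpow_natCast, Equiv.Perm.coe_pow] using hf.iterate n
  | .negSucc n => by
    simpa only [zpow_negSucc, ← inv_pow, Equiv.Perm.coe_pow, Equiv.Perm.inv_def]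
      using hf'.iterate (n + 1)

theorem nonempty_iInter_of_nonempty_biInter_Icc {X : Type*} [TopologicalSpace X] [CompactSpace X]
    {T : ℤ → Set X} (hT : ∀ n, IsClosed (T n))
    (hne : ∀ n m : ℤ, n ≤ m → (⋂ k ∈ Icc n m, T k).Nonempty) : (⋂ n, T n).Nonempty := by
  set C : ℕ → Set X := fun N => ⋂ k ∈ Icc (-(N : ℤ)) N, T k
  have hC : ∀ N, IsClosed (C N) := fun N => isClosed_biInter fun k _ => hT k
  have hanti : ∀ N, C (N + 1) ⊆ C N := fun N =>
    biInter_subset_biInter_left (Icc_subset_Icc (by omega) (by omega))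
  obtain ⟨x, hx⟩ := (hC 0).isCompact.nonempty_iInter_of_sequence_nonempty_isCompact_isClosed C
    hanti (fun N => hne _ _ (by omega)) hC
  refine ⟨x, mem_iInter.2 fun n => ?_⟩
  exact mem_iInter₂.1 (mem_iInter.1 hx n.natAbs) n ⟨by omega, by omega⟩

theorem Equiv.Perm.nonempty_biInter_zpow_preimage_Icc {X : Type*} (f : Equiv.Perm X)
    (S : ℤ → Set X) {n m : ℤ}
    (h : (⋂ k ∈ Icc n m, ⇑(f ^ (k - n)) ⁻¹' S k).Nonempty) :
    (⋂ k ∈ Icc n m, ⇑(f ^ k) ⁻¹' S k).Nonempty := by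
  obtain ⟨z, hz⟩ := h
  refine ⟨(f ^ (-n)) z, mem_iInter₂.2 fun k hk => ?_⟩
  rw [mem_preimage, ← Equiv.Perm.mul_apply, ← zpow_add, ← sub_eq_add_neg]
  exact mem_iInter₂.1 hz k hk

theorem eq_of_forall_zpow_mem_of_diam_lt {X : Type*} [MetricSpace X] [BoundedSpace X]
    {f : Equiv.Perm X} {r₀ : ℝ}
    (hexp : ∀ x y : X, (∀ n : ℤ, dist ((f ^ n) x) ((f ^ n) y) < r₀) → x = y)
    {S : ℤ → Set X} (hS : ∀ n, Metric.diam (S n) < r₀) {x y : X}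
    (hx : ∀ n, (f ^ n) x ∈ closure (S n)) (hy : ∀ n, (f ^ n) y ∈ closure (S n)) : x = y :=
  hexp x y fun n => calc
    dist ((f ^ n) x) ((f ^ n) y) ≤ Metric.diam (closure (S n)) :=
      Metric.dist_le_diam_of_mem (Bornology.IsBounded.all _) (hx n) (hy n)
    _ = Metric.diam (S n) := Metric.diam_closure _
    _ < r₀ := hS n

theorem stmt_0_general {M : Type*} [MetricSpace M] [CompactSpace M]
    (f : Equiv.Perm M) (hf : Continuous f) (hf' : Continuous f.symm) (r₀ : ℝ)
    (hexp : ∀ x y : M, (∀ n : ℤ, dist ((f ^ n) x) ((f ^ n) y) < r₀) → x = y)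
    (ι : Type*) (P : ι → Set M)
    (hdiam : ∀ i, Metric.diam (P i) < r₀)
    (A : ℤ → ι)
    (hA : ∀ n m : ℤ, n ≤ m →
      (⋂ k ∈ Set.Icc n m, (⇑(f ^ (k - n)) ⁻¹' P (A k))).Nonempty) :
    ∃ x : M, (⋂ n : ℤ, ⇑(f ^ n) ⁻¹' closure (P (A n))) = {x} := by
  have hne : (⋂ n : ℤ, ⇑(f ^ n) ⁻¹' closure (P (A n))).Nonempty := by
    refine nonempty_iInter_of_nonempty_biInter_Icc
      (fun n => isClosed_closure.preimage (Equiv.Perm.continuous_zpow hf hf' n)) fun n m hnm => ?_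
    refine (f.nonempty_biInter_zpow_preimage_Icc _ (hA n m hnm)).mono ?_
    exact biInter_mono subset_rfl fun k _ => preimage_mono subset_closure
  obtain ⟨x, hx⟩ := hne
  refine ⟨x, eq_singleton_iff_unique_mem.2 ⟨hx, fun y hy => ?_⟩⟩
  exact eq_of_forall_zpow_mem_of_diam_lt hexp (fun n => hdiam (A n))
    (mem_iInter.1 hy) (mem_iInter.1 hx)

/-- For an expansive homeomorphism `f` with expansivity constant `r₀` and a
finite collection `P` of pairwise disjoint open sets of diameter `< r₀` with dense union,
every sequence in `Σ(f,P)` (all finite cylinders nonempty) codes exactly one point: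
`⋂ₙ f⁻ⁿ(closure A_n)` is a singleton. -/
theorem stmt_0 {M : Type*} [MetricSpace M] [CompactSpace M]
    (f : Equiv.Perm M) (hf : Continuous f) (hf' : Continuous f.symm) (r₀ : ℝ) (hr₀ : 0 < r₀)
    (hexp : ∀ x y : M, (∀ n : ℤ, dist ((f ^ n) x) ((f ^ n) y) < r₀) → x = y)
    (ι : Type*) [Fintype ι] (P : ι → Set M)
    (hopen : ∀ i, IsOpen (P i))
    (hdisj : ∀ i j, i ≠ j → Disjoint (P i) (P j))
    (hdense : Dense (⋃ i, P i))
    (hdiam : ∀ i, Metric.diam (P i) < r₀)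
    (A : ℤ → ι)
    (hA : ∀ n m : ℤ, n ≤ m →
      (⋂ k ∈ Set.Icc n m, (⇑(f ^ (k - n)) ⁻¹' P (A k))).Nonempty) :
    ∃ x : M, (⋂ n : ℤ, ⇑(f ^ n) ⁻¹' closure (P (A n))) = {x} :=
  stmt_0_general f hf hf' r₀ hexp ι P hdiam A hA
end

section
/- Let T : X → X and S : Y → Y be measurable maps on standard Borel spaces, p : X → Y measurable with p ∘ T = S ∘ p. Let μ be a T-invariant probability measure on X such that p_*μ is ergodic for S and μ is the unique T-invariant measure projecting to p_*μ. Then μ is ergodic for T. -/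
/-!
If `μ` were not ergodic, some `T`-invariant set `s` with `0 < μ s < 1` would give the invariant
probability measure `μ[|s] ≪ μ`. Its projection is `S`-invariant and absolutely continuous with
respect to the ergodic measure `p₊μ`, hence equal to it; uniqueness of the lift then forces
`μ[|s] = μ`, which is absurd since `μ[|s] sᶜ = 0 < μ sᶜ`.
-/

open MeasureTheory ProbabilityTheory Function

section

variable {X Y : Type*} [MeasurableSpace X] [MeasurableSpace Y]

theorem MeasureTheory.MeasurePreserving.cond_of_preimage_eq {T : X → X} {μ : Measure X}
    (hT : MeasurePreserving T μ μ) {s : Set X} (hs : MeasurableSet s) (hTs : T ⁻¹' s = s) :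
    MeasurePreserving T μ[|s] μ[|s] := by
  have hrestrict := hT.restrict_preimage hs
  rw [hTs] at hrestrict
  exact hrestrict.smul_measure _

theorem Ergodic.of_forall_cond_eq {T : X → X} {μ : Measure X} (hT : MeasurePreserving T μ μ)
    (h : ∀ s, MeasurableSet s → T ⁻¹' s = s → μ s ≠ 0 → μ[|s] = μ) : Ergodic T μ := by
  refine ⟨hT, ⟨fun s hs hTs => ?_⟩⟩
  by_contra hconst
  obtain ⟨hμs, hμsc⟩ : μ s ≠ 0 ∧ μ sᶜ ≠ 0 := by
    simpa [Filter.eventuallyConst_set, ae_iff, and_comm, Set.compl_def] using hconst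
  apply hμsc
  rw [← h s hs hTs hμs, cond_apply hs, Set.inter_compl_self, measure_empty, mul_zero]

theorem Ergodic.map_eq_of_semiconj {T : X → X} {S : Y → Y} {p : X → Y} (hp : Measurable p)
    (hpTS : Semiconj p T S) {μ ν : Measure X} [IsProbabilityMeasure μ] [IsProbabilityMeasure ν]
    (herg : Ergodic S (μ.map p)) (hν : MeasurePreserving T ν ν) (hνμ : ν ≪ μ) :
    ν.map p = μ.map p := by
  have := Measure.isProbabilityMeasure_map (μ := μ) hp.aemeasurable
  have := Measure.isProbabilityMeasure_map (μ := ν) hp.aemeasurable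
  have hSν : MeasurePreserving S (ν.map p) (ν.map p) :=
    MeasurePreserving.of_semiconj ⟨hp, rfl⟩ hν hpTS herg.measurable
  exact herg.eq_of_absolutelyContinuous hSν (hνμ.map hp)

end

theorem stmt_4_general {X Y : Type*} [MeasurableSpace X]
    [MeasurableSpace Y]
    (T : X → X) (S : Y → Y)
    (p : X → Y) (hp : Measurable p) (hcomm : p ∘ T = S ∘ p)
    (μ : Measure X) [IsProbabilityMeasure μ]
    (hinv : MeasurePreserving T μ μ)
    (herg : Ergodic S (μ.map p))
    (huniq : ∀ μ' : Measure X, IsProbabilityMeasure μ' → MeasurePreserving T μ' μ' →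
      μ'.map p = μ.map p → μ' = μ) :
    Ergodic T μ := by
  refine Ergodic.of_forall_cond_eq hinv fun s hs hTs hμs => ?_
  have hprob := cond_isProbabilityMeasure (μ := μ) hμs
  have hTcond := hinv.cond_of_preimage_eq hs hTs
  exact huniq _ hprob hTcond <|
    herg.map_eq_of_semiconj hp (congrFun hcomm) hTcond cond_absolutelyContinuous

/-- if `p ∘ T = S ∘ p`, `μ` is `T`-invariant, `p₊μ` is `S`-ergodic and `μ` is
the unique `T`-invariant probability measure projecting to `p₊μ`, then `μ` is `T`-ergodic. -/
theorem stmt_4 {X Y : Type*} [MeasurableSpace X] [StandardBorelSpace X]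
    [MeasurableSpace Y] [StandardBorelSpace Y]
    (T : X → X) (S : Y → Y) (hT : Measurable T) (hS : Measurable S)
    (p : X → Y) (hp : Measurable p) (hcomm : p ∘ T = S ∘ p)
    (μ : Measure X) [IsProbabilityMeasure μ]
    (hinv : MeasurePreserving T μ μ)
    (herg : Ergodic S (μ.map p))
    (huniq : ∀ μ' : Measure X, IsProbabilityMeasure μ' → MeasurePreserving T μ' μ' →
      μ'.map p = μ.map p → μ' = μ) :
    Ergodic T μ :=
  stmt_4_general T S p hp hcomm μ hinv herg huniq
end

section
/- Let f : M → M be a continuous map of a compact metric space with topological entropy h_top(f), and let μ be an ergodic invariant probability measure with Kolmogorov–Sinai entropy h(f,μ). Fix a finite partition Q with h(f,μ) = h(f,μ,Q). Suppose there exist constants c, C > 0, a measurable set M₁, and an integer T ≥ 1 such that, conditioned on the σ-algebra W = ⋁_{n≥1} fⁿQ, at most C elements of Q^T have positive conditional measure at points of M₁, while for points outside M₁ the number of such elements is at most e^{(h_top(f)+α)T}. Then h(f,μ) ≤ μ(M₁)·(log C)/T + (1−μ(M₁))·(h_top(f)+α). In particular, if μ(M₁) ≥ m₁ then h(f,μ)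 ≤ h_top(f) − m₁·h_top(f) + α + (log C)/T. -/
open MeasureTheory Dynamics

variable {X : Type*} [MeasurableSpace X]

/-- The length-`N` cylinder of the partition coded by `s : X → ι`. -/
def cylinder (T : X → X) {ι : Type*} (s : X → ι) (N : ℕ) (w : Fin N → ι) : Set X :=
  {x | ∀ k : Fin N, s (T^[(k : ℕ)] x) = w k}

/-- Entropy of `T` relative to the finite partition coded by `s`:
`h(T,μ,Q) = inf_n (1/n) H_μ(Qⁿ)` (which equals the limit, by subadditivity). -/
noncomputable def relEntropy (T : X → X) (μ : Measure X) {ι : Type*} [Fintype ι]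
    (s : X → ι) : ℝ :=
  ⨅ n : ℕ, ((n : ℝ) + 1)⁻¹ *
    ∑ w : Fin (n + 1) → ι, Real.negMulLog (μ (cylinder T s (n + 1) w)).toReal

/-!
Write `Qⁿ` for the partition into itineraries of length `n` and `W` for the past σ-algebra
generated by `s ∘ f⁻¹, s ∘ f⁻², …`. Moving by `f^{b}` turns the chain rule into
`H(Q^{b+n}) = H(Qⁿ | past of length b) + H(Q^b)`, so `H(Q^{nj})` is a sum of `j` conditional
entropies. By Lévy's upward theorem they converge to `H(Qⁿ | W) = ∫ H_{μ_x}(Qⁿ) dμ`, and Cesàro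
averaging gives `h(f, μ, Q) ≤ H(Qⁿ | W) / n`. By Gibbs' inequality `H_{μ_x}(Q^T)` is at most the
log of the number of cylinders charged by `μ_x`, hence at most `log C` on `M₁` and
`(h_top + α) T` off it; integrating over `x` gives the bound.
-/

open Filter Function Real Topology

section PartitionEntropy

variable {Ω κ α : Type*} {mΩ : MeasurableSpace Ω} {μ : Measure Ω} [Fintype κ] [Fintype α]

noncomputable def partitionEntropy (μ : Measure Ω) (t : Ω → κ) : ℝ :=
  ∑ b, negMulLog (μ.real (t ⁻¹' {b}))

/-- The entropy `H_{μ_x}(t)` of the partition coded by `t` under the conditional measure `μ_x`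
given the σ-algebra `m`. -/
noncomputable def condPartitionEntropy (μ : Measure Ω) (m : MeasurableSpace Ω) (t : Ω → κ)
    (x : Ω) : ℝ :=
  ∑ b, negMulLog ((μ[(t ⁻¹' {b}).indicator 1 | m]) x)

theorem partitionEntropy_of_subsingleton [Subsingleton κ] [IsProbabilityMeasure μ]
    (t : Ω → κ) : partitionEntropy μ t = 0 := by
  refine Finset.sum_eq_zero fun b _ => ?_
  rw [show t ⁻¹' {b} = Set.univ from Set.eq_univ_of_forall fun x => Subsingleton.elim (t x) b,
    probReal_univ, negMulLog_one]

theorem partitionEntropy_comp_of_injective (t : Ω → κ) {e : κ → α} (he : Injective e) :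
    partitionEntropy μ (e ∘ t) = partitionEntropy μ t := by
  refine (Fintype.sum_of_injective e he _ _ (fun a ha => ?_) fun b => ?_).symm
  · rw [show e ∘ t ⁻¹' {a} = ∅ from Set.eq_empty_of_forall_notMem fun x hx => ha ⟨t x, hx⟩,
      measureReal_empty, negMulLog_zero]
  · rw [Set.preimage_comp, ← Set.image_singleton, he.preimage_image]

theorem partitionEntropy_comp_of_measurePreserving [MeasurableSpace κ]
    [MeasurableSingletonClass κ] {g : Ω → Ω} (hg : MeasurePreserving g μ μ) {t : Ω → κ}
    (ht : Measurable t) : partitionEntropy μ (t ∘ g) = partitionEntropy μ t := by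
  refine Finset.sum_congr rfl fun b _ => ?_
  rw [Set.preimage_comp,
    hg.measureReal_preimage (ht (measurableSet_singleton b)).nullMeasurableSet]

theorem partitionEntropy_eq_of_eq_comp [MeasurableSpace α] [MeasurableSingletonClass α]
    {g : Ω → Ω} (hg : MeasurePreserving g μ μ) {t : Ω → κ} {t' : Ω → α} (ht' : Measurable t')
    {e : α → κ} (he : Injective e) (h : ∀ x, t x = e (t' (g x))) :
    partitionEntropy μ t = partitionEntropy μ t' := by
  rw [show t = e ∘ t' ∘ g from funext h, partitionEntropy_comp_of_injective _ he,
    partitionEntropy_comp_of_measurePreserving hg ht']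

theorem sum_negMulLog_le_log {p : κ → ℝ} (h0 : ∀ b, 0 ≤ p b) (h1 : ∑ b, p b = 1) {c : ℝ}
    (hc : ({b | 0 < p b}.ncard : ℝ) ≤ c) : ∑ b, negMulLog (p b) ≤ log c := by
  classical
  set S := Finset.univ.filter (fun b => 0 < p b)
  have hsupp : ∀ b ∉ S, p b = 0 := fun b hb =>
    le_antisymm (not_lt.1 fun h => hb (Finset.mem_filter.2 ⟨Finset.mem_univ b, h⟩)) (h0 b)
  have hS : ∑ b ∈ S, p b = 1 := by
    rw [← h1, Finset.sum_subset (Finset.subset_univ S) fun b _ hb => hsupp b hb]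
  have hcard : ({b | 0 < p b}.ncard : ℝ) = S.card := by
    rw [← Set.ncard_coe_finset, Finset.coe_filter]
    simp
  have hpos : (0 : ℝ) < S.card := by
    rcases S.eq_empty_or_nonempty with hS0 | hS0
    · simp [hS0] at hS
    · exact_mod_cast hS0.card_pos
  calc ∑ b, negMulLog (p b) = ∑ b ∈ S, p b • log (p b)⁻¹ := by
        rw [← Finset.sum_subset (Finset.subset_univ S) fun b _ hb => by simp [hsupp b hb]]
        simp [negMulLog, log_inv]
    _ ≤ log (∑ b ∈ S, p b • (p b)⁻¹) :=
        strictConcaveOn_log_Ioi.concaveOn.le_map_sum (fun b _ => h0 b) hS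
          fun b hb => inv_pos.2 (Finset.mem_filter.1 hb).2
    _ = log S.card := by
        simp_rw [smul_eq_mul]
        rw [Finset.sum_congr rfl fun b hb => mul_inv_cancel₀ (Finset.mem_filter.1 hb).2.ne']
        simp
    _ ≤ log c := log_le_log hpos (hcard ▸ hc)

theorem sum_negMulLog_nonneg {p : κ → ℝ} (h0 : ∀ b, 0 ≤ p b) (h1 : ∑ b, p b = 1) :
    0 ≤ ∑ b, negMulLog (p b) :=
  Finset.sum_nonneg fun b _ => negMulLog_nonneg (h0 b)
    (h1 ▸ Finset.single_le_sum (fun b _ => h0 b) (Finset.mem_univ b))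

theorem mul_sum_negMulLog_eq {q : ℝ} {p h : κ → ℝ} (hp : ∀ b, q * h b = p b)
    (hq : ∑ b, p b = q) : q * ∑ b, negMulLog (h b) = ∑ b, negMulLog (p b) - negMulLog q := by
  have hsum : (∑ b, h b) * negMulLog q = negMulLog q := by
    rcases eq_or_ne q 0 with rfl | hq0
    · simp
    · have : q * ∑ b, h b = q * 1 := by simp_rw [Finset.mul_sum, hp, hq, mul_one]
      rw [mul_left_cancel₀ hq0 this, one_mul]
  calc q * ∑ b, negMulLog (h b) = ∑ b, negMulLog (q * h b) - (∑ b, h b) * negMulLog q := by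
        simp_rw [negMulLog_mul, Finset.sum_add_distrib, ← Finset.sum_mul, ← Finset.mul_sum]
        ring
    _ = _ := by simp_rw [hp, hsum]

end PartitionEntropy

section CondPartitionEntropy

variable {Ω κ α : Type*} {mΩ : MeasurableSpace Ω} {μ : Measure Ω}
  [Fintype κ] [MeasurableSpace κ] [MeasurableSingletonClass κ]

theorem Measurable.comap_top_le {v : Ω → κ} (hv : Measurable v) :
    MeasurableSpace.comap v ⊤ ≤ mΩ := by
  rintro _ ⟨S, -, rfl⟩
  exact hv .of_discrete

theorem integral_comp_eq_sum [IsFiniteMeasure μ] {v : Ω → κ} (hv : Measurable v) (φ : κ → ℝ) :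
    ∫ x, φ (v x) ∂μ = ∑ b, μ.real (v ⁻¹' {b}) * φ b := by
  rw [← integral_map hv.aemeasurable .of_discrete, integral_fintype .of_finite]
  simp [map_measureReal_apply hv (measurableSet_singleton _)]

/-- Being `σ(v)`-measurable, the conditional expectation factors through `v`; integrating it over
the atoms `{v = b}` then determines its values wherever `μ{v = b} ≠ 0`. -/
theorem exists_condExp_indicator_comap_eq [IsFiniteMeasure μ] {v : Ω → κ} (hv : Measurable v)
    {A : Set Ω} (hA : MeasurableSet A) :
    ∃ h : κ → ℝ, μ[A.indicator 1 | MeasurableSpace.comap v ⊤] = h ∘ v ∧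
      ∀ b, μ.real (v ⁻¹' {b}) * h b = μ.real (A ∩ v ⁻¹' {b}) := by
  have hm := hv.comap_top_le
  have hfac : (μ[A.indicator (1 : Ω → ℝ) | MeasurableSpace.comap v ⊤]).FactorsThrough v :=
    StronglyMeasurable.factorsThrough (mY := ⊤) stronglyMeasurable_condExp
  refine ⟨extend v (μ[A.indicator 1 | MeasurableSpace.comap v ⊤]) 0,
    funext fun x => (hfac.extend_apply 0 x).symm, fun b => ?_⟩
  have hb : MeasurableSet[MeasurableSpace.comap v ⊤] (v ⁻¹' {b}) := ⟨{b}, trivial, rfl⟩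
  have := setIntegral_condExp (μ := μ) hm ((integrable_const (1 : ℝ)).indicator hA) hb
  rwa [setIntegral_congr_fun (hm _ hb) fun x (hx : v x = b) =>
      hx ▸ (hfac.extend_apply 0 x).symm, setIntegral_const, integral_indicator_const _ hA,
    measureReal_restrict_apply hA, smul_eq_mul, smul_eq_mul, mul_one] at this

theorem integral_condPartitionEntropy_comap [Fintype α] [MeasurableSpace α]
    [MeasurableSingletonClass α] [IsFiniteMeasure μ] {u : Ω → α} {v : Ω → κ} (hu : Measurable u)
    (hv : Measurable v) :
    ∫ x, condPartitionEntropy μ (MeasurableSpace.comap v ⊤) u x ∂μ =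
      partitionEntropy μ (fun x => (v x, u x)) - partitionEntropy μ v := by
  choose h hcomp hmul using fun a => exists_condExp_indicator_comap_eq (μ := μ) hv
    (hu (measurableSet_singleton a))
  have hF : condPartitionEntropy μ (MeasurableSpace.comap v ⊤) u =
      fun x => ∑ a, negMulLog (h a (v x)) := by
    funext x
    simp [condPartitionEntropy, hcomp]
  rw [hF, integral_comp_eq_sum hv (fun b => ∑ a, negMulLog (h a b)), partitionEntropy,
    partitionEntropy, Fintype.sum_prod_type, ← Finset.sum_sub_distrib]
  simp_rw [← Set.singleton_prod_singleton, Set.mk_preimage_prod]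
  refine Finset.sum_congr rfl fun b _ => mul_sum_negMulLog_eq (fun a => ?_) ?_
  · rw [hmul, Set.inter_comm]
  · simp_rw [Set.inter_comm (v ⁻¹' _),
      ← measureReal_restrict_apply (hu (measurableSet_singleton _))]
    rw [sum_measureReal_preimage_singleton _ fun a _ => hu (measurableSet_singleton a),
      Finset.coe_univ, Set.preimage_univ, measureReal_restrict_apply_univ]

end CondPartitionEntropy

section Conditional

variable {Ω κ : Type*} {m mΩ : MeasurableSpace Ω} {μ : Measure Ω} [Fintype κ] {t : Ω → κ}

theorem stronglyMeasurable_condPartitionEntropy :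
    StronglyMeasurable[m] (condPartitionEntropy μ m t) :=
  Finset.stronglyMeasurable_fun_sum _ fun _ _ =>
    continuous_negMulLog.comp_stronglyMeasurable stronglyMeasurable_condExp

variable [IsProbabilityMeasure μ] [MeasurableSpace κ] [MeasurableSingletonClass κ]

theorem ae_condExp_indicator_preimage_nonneg_and_sum_eq_one (hm : m ≤ mΩ) (ht : Measurable t) :
    ∀ᵐ x ∂μ, (∀ b, 0 ≤ (μ[(t ⁻¹' {b}).indicator (1 : Ω → ℝ) | m]) x) ∧
      ∑ b, (μ[(t ⁻¹' {b}).indicator (1 : Ω → ℝ) | m]) x = 1 := by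
  have hnonneg := ae_all_iff.2 fun b => condExp_nonneg (m := m) (μ := μ)
    (f := (t ⁻¹' {b}).indicator 1)
    (ae_of_all _ (Set.indicator_nonneg fun _ _ => zero_le_one' ℝ))
  have hsum : ∑ b, (t ⁻¹' {b}).indicator (1 : Ω → ℝ) = fun _ => 1 := by
    funext x
    rw [Finset.sum_apply, Finset.sum_eq_single_of_mem (f := fun b => (t ⁻¹' {b}).indicator 1 x)
      (t x) (Finset.mem_univ _)
      fun b _ hb => Set.indicator_of_notMem (show x ∉ t ⁻¹' {b} from Ne.symm hb) _]
    simp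
  have hcond := condExp_finsetSum (μ := μ) (s := .univ)
    (f := fun b => (t ⁻¹' {b}).indicator (1 : Ω → ℝ))
    (fun b _ => (integrable_const (1 : ℝ)).indicator (ht (measurableSet_singleton b))) m
  rw [hsum, condExp_const hm] at hcond
  filter_upwards [hnonneg, hcond] with x hx hx1
  exact ⟨hx, by simpa using hx1.symm⟩

theorem ae_condPartitionEntropy_le_log (hm : m ≤ mΩ) (ht : Measurable t) :
    ∀ᵐ x ∂μ, ∀ c : ℝ,
      ({b | 0 < (μ[(t ⁻¹' {b}).indicator (1 : Ω → ℝ) | m]) x}.ncard : ℝ) ≤ c →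
        condPartitionEntropy μ m t x ≤ log c := by
  filter_upwards [ae_condExp_indicator_preimage_nonneg_and_sum_eq_one hm ht] with x hx c hc
  exact sum_negMulLog_le_log hx.1 hx.2 hc

theorem ae_norm_condPartitionEntropy_le (hm : m ≤ mΩ) (ht : Measurable t) :
    ∀ᵐ x ∂μ, ‖condPartitionEntropy μ m t x‖ ≤ log (Fintype.card κ) := by
  filter_upwards [ae_condExp_indicator_preimage_nonneg_and_sum_eq_one hm ht,
    ae_condPartitionEntropy_le_log hm ht] with x hx hle
  rw [condPartitionEntropy, Real.norm_of_nonneg (sum_negMulLog_nonneg hx.1 hx.2)]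
  refine hle _ ?_
  exact_mod_cast (Set.ncard_le_card _).trans_eq Nat.card_eq_fintype_card

theorem integrable_condPartitionEntropy (hm : m ≤ mΩ) (ht : Measurable t) :
    Integrable (condPartitionEntropy μ m t) μ :=
  .of_bound (stronglyMeasurable_condPartitionEntropy.mono hm).aestronglyMeasurable _
    (ae_norm_condPartitionEntropy_le hm ht)

/-- Lévy's upward theorem pointwise, then dominated convergence with the bound `log |κ|`. -/
theorem tendsto_integral_condPartitionEntropy (ℱ : Filtration ℕ mΩ) (ht : Measurable t) :
    Tendsto (fun n => ∫ x, condPartitionEntropy μ (ℱ n) t x ∂μ) atTop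
      (𝓝 (∫ x, condPartitionEntropy μ (⨆ n, ℱ n) t x ∂μ)) := by
  refine tendsto_integral_of_dominated_convergence _
    (fun n => (stronglyMeasurable_condPartitionEntropy.mono (ℱ.le n)).aestronglyMeasurable)
    (integrable_const _) (fun n => ae_norm_condPartitionEntropy_le (ℱ.le n) ht) ?_
  filter_upwards [ae_all_iff.2 fun b => tendsto_ae_condExp (μ := μ) (ℱ := ℱ)
    ((t ⁻¹' {b}).indicator (1 : Ω → ℝ))] with x hx
  exact tendsto_finsetSum _ fun b _ => (continuous_negMulLog.tendsto _).comp (hx b)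

end Conditional

section Itinerary

variable {Ω ι : Type*}

def itinerary (T : Ω → Ω) (s : Ω → ι) (n : ℕ) (x : Ω) : Fin n → ι :=
  fun k => s (T^[k] x)

theorem cylinder_eq_preimage_itinerary [MeasurableSpace Ω] (T : Ω → Ω) (s : Ω → ι) (n : ℕ)
    (w : Fin n → ι) : cylinder T s n w = itinerary T s n ⁻¹' {w} := by
  ext x
  exact funext_iff.symm

theorem itinerary_add (T : Ω → Ω) (s : Ω → ι) (b n : ℕ) (x : Ω) :
    itinerary T s (b + n) x = Fin.append (itinerary T s b x) (itinerary T s n (T^[b] x)) := by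
  funext k
  refine Fin.addCases (fun i => ?_) (fun j => ?_) k
  · simp [itinerary]
  · simp [itinerary, ← iterate_add_apply, add_comm]

theorem itinerary_eq_comp_rev (f : Ω ≃ Ω) (s : Ω → ι) (n : ℕ) (x : Ω) :
    itinerary f s n x = itinerary f.symm (s ∘ f.symm) n (f^[n] x) ∘ Fin.rev := by
  funext k
  have hsplit : f^[n] x = f^[n - (k + 1) + 1] (f^[k] x) := by
    rw [← iterate_add_apply]
    congr 1
    omega
  simp only [itinerary, comp_apply, Fin.val_rev, hsplit, ← iterate_succ_apply' f.symm]
  exact congrArg s (f.left_inv.iterate _ _).symm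

theorem comap_itinerary [Finite ι] (T : Ω → Ω) (s : Ω → ι) (n : ℕ) :
    MeasurableSpace.comap (itinerary T s n) ⊤ =
      ⨆ k : Fin n, MeasurableSpace.comap (fun x => s (T^[k] x)) ⊤ := by
  let : MeasurableSpace ι := ⊤
  have htop : (⊤ : MeasurableSpace (Fin n → ι)) = MeasurableSpace.pi :=
    (top_unique fun S _ => MeasurableSet.of_discrete).symm
  rw [htop, MeasurableSpace.pi, MeasurableSpace.comap_iSup]
  simp_rw [MeasurableSpace.comap_comp]
  rfl

theorem measurable_itinerary {mΩ : MeasurableSpace Ω} [MeasurableSpace ι] {T : Ω → Ω}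
    (hT : Measurable T) {s : Ω → ι} (hs : Measurable s) (n : ℕ) :
    Measurable (itinerary T s n) :=
  measurable_pi_lambda _ fun k => hs.comp (hT.iterate k)

theorem relEntropy_le_partitionEntropy_itinerary [MeasurableSpace Ω] {μ : Measure Ω}
    [IsProbabilityMeasure μ] [Fintype ι] (T : Ω → Ω) (s : Ω → ι) {n : ℕ} (hn : 0 < n) :
    relEntropy T μ s ≤ partitionEntropy μ (itinerary T s n) / n := by
  obtain ⟨k, rfl⟩ : ∃ k, n = k + 1 := ⟨n - 1, by omega⟩
  have hbdd : BddBelow (Set.range fun k : ℕ => ((k : ℝ) + 1)⁻¹ *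
      ∑ w : Fin (k + 1) → ι, negMulLog (μ (cylinder T s (k + 1) w)).toReal) :=
    ⟨0, Set.forall_mem_range.2 fun k => mul_nonneg (by positivity) <| Finset.sum_nonneg
      fun w _ => negMulLog_nonneg ENNReal.toReal_nonneg measureReal_le_one⟩
  refine (ciInf_le hbdd k).trans_eq ?_
  simp_rw [cylinder_eq_preimage_itinerary]
  rw [partitionEntropy, div_eq_inv_mul]
  push_cast
  rfl

variable {mΩ : MeasurableSpace Ω} [Fintype ι] [MeasurableSpace ι] [MeasurableSingletonClass ι]

def itineraryFiltration {T : Ω → Ω} (hT : Measurable T) {s : Ω → ι} (hs : Measurable s) :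
    Filtration ℕ mΩ where
  seq n := MeasurableSpace.comap (itinerary T s n) ⊤
  mono' n n' h := by
    simp only [comap_itinerary]
    exact iSup_le fun k => le_iSup_of_le (Fin.castLE h k) le_rfl
  le' n := (measurable_itinerary hT hs n).comap_top_le

theorem iSup_itineraryFiltration {T : Ω → Ω} (hT : Measurable T) {s : Ω → ι}
    (hs : Measurable s) :
    ⨆ n, itineraryFiltration hT hs n =
      ⨆ k : ℕ, MeasurableSpace.comap (fun x => s (T^[k] x)) ⊤ := by
  refine le_antisymm (iSup_le fun n => ?_) (iSup_le fun k => le_iSup_of_le (k + 1) ?_)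
  · exact (comap_itinerary T s n).trans_le (iSup_le fun k => le_iSup_of_le (k : ℕ) le_rfl)
  · exact le_of_le_of_eq (le_iSup_of_le (Fin.last k) le_rfl) (comap_itinerary T s (k + 1)).symm

variable {μ : Measure Ω} [IsProbabilityMeasure μ] {f : Ω ≃ Ω} {s : Ω → ι}

/-- After moving by `f^b`, the first `b` symbols of an itinerary of length `b + n` become the past
itinerary of length `b`, so this is the chain rule `H(P, Qⁿ) = H(Qⁿ | P) + H(P)`. -/
theorem partitionEntropy_itinerary_add (hf : MeasurePreserving f μ μ) (hf' : Measurable f.symm)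
    (hs : Measurable s) (b n : ℕ) :
    partitionEntropy μ (itinerary f s (b + n)) =
      ∫ x, condPartitionEntropy μ (MeasurableSpace.comap (itinerary f.symm (s ∘ f.symm) b) ⊤)
        (itinerary f s n) x ∂μ + partitionEntropy μ (itinerary f s b) := by
  have hpast := measurable_itinerary hf' (hs.comp hf') b
  have hfut := measurable_itinerary hf.measurable hs n
  have hjoint : partitionEntropy μ (itinerary f s (b + n)) = partitionEntropy μ
      (fun x => (itinerary f.symm (s ∘ f.symm) b x, itinerary f s n x)) :=
    partitionEntropy_eq_of_eq_comp (hf.iterate b) (hpast.prodMk hfut)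
      ((Fin.appendEquiv b n).injective.comp
        (Fin.rev_surjective.injective_comp_right.prodMap injective_id))
      fun x => by rw [itinerary_add, itinerary_eq_comp_rev f s b]; rfl
  have hpast_eq : partitionEntropy μ (itinerary f s b) =
      partitionEntropy μ (itinerary f.symm (s ∘ f.symm) b) :=
    partitionEntropy_eq_of_eq_comp (hf.iterate b) hpast Fin.rev_surjective.injective_comp_right
      (itinerary_eq_comp_rev f s b)
  rw [hjoint, hpast_eq, integral_condPartitionEntropy_comap hfut hpast]
  ring

theorem partitionEntropy_itinerary_mul (hf : MeasurePreserving f μ μ) (hf' : Measurable f.symm)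
    (hs : Measurable s) (n j : ℕ) :
    partitionEntropy μ (itinerary f s (n * j)) = ∑ i ∈ Finset.range j,
      ∫ x, condPartitionEntropy μ (itineraryFiltration hf' (hs.comp hf') (n * i))
        (itinerary f s n) x ∂μ := by
  induction j with
  | zero => rw [Nat.mul_zero]; exact partitionEntropy_of_subsingleton _
  | succ j ih =>
    rw [Finset.sum_range_succ, ← ih, Nat.mul_succ, partitionEntropy_itinerary_add hf hf' hs,
      add_comm]
    rfl

theorem relEntropy_le_integral_condPartitionEntropy (hf : MeasurePreserving f μ μ)
    (hf' : Measurable f.symm) (hs : Measurable s) {n : ℕ} (hn : 0 < n) :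
    relEntropy f μ s ≤ (∫ x, condPartitionEntropy μ
      (⨆ k : ℕ, MeasurableSpace.comap (fun y => s (f.symm^[k + 1] y)) ⊤)
        (itinerary f s n) x ∂μ) / n := by
  set ℱ := itineraryFiltration hf' (hs.comp hf')
  have hW : ⨆ k, ℱ k = ⨆ k : ℕ, MeasurableSpace.comap (fun y => s (f.symm^[k + 1] y)) ⊤ := by
    simp_rw [ℱ, iSup_itineraryFiltration, comp_apply, iterate_succ_apply']
  have hlim := hW ▸ (tendsto_integral_condPartitionEntropy (μ := μ) ℱ
    (measurable_itinerary hf.measurable hs n)).comp (tendsto_id.const_mul_atTop' hn)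
  refine ge_of_tendsto (hlim.cesaro.div_const n) (eventually_atTop.2 ⟨1, fun j hj => ?_⟩)
  calc relEntropy f μ s ≤ partitionEntropy μ (itinerary f s (n * j)) / ↑(n * j) :=
        relEntropy_le_partitionEntropy_itinerary _ _ (by positivity)
    _ = _ := by
        rw [partitionEntropy_itinerary_mul hf hf' hs]
        push_cast
        field_simp
        rfl

end Itinerary

theorem integral_le_of_ae_le_of_ae_le_compl {Ω : Type*} {mΩ : MeasurableSpace Ω} {μ : Measure Ω}
    [IsProbabilityMeasure μ] {F : Ω → ℝ} (hF : Integrable F μ) {A : Set Ω} (hA : MeasurableSet A)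
    {a b : ℝ} (ha : ∀ᵐ x ∂μ, x ∈ A → F x ≤ a) (hb : ∀ᵐ x ∂μ, x ∉ A → F x ≤ b) :
    ∫ x, F x ∂μ ≤ μ.real A * a + (1 - μ.real A) * b := by
  classical
  calc ∫ x, F x ∂μ ≤ ∫ x, A.piecewise (fun _ => a) (fun _ => b) x ∂μ := by
        refine integral_mono_ae hF (.piecewise hA (integrable_const a).integrableOn
          (integrable_const b).integrableOn) ?_
        filter_upwards [ha, hb] with x hxa hxb
        by_cases hx : x ∈ A
        · simpa [hx] using hxa hx
        · simpa [hx] using hxb hx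
    _ = μ.real A * a + (1 - μ.real A) * b := by
        rw [integral_piecewise hA (integrable_const a).integrableOn
          (integrable_const b).integrableOn, setIntegral_const, setIntegral_const,
          probReal_compl_eq_one_sub hA, smul_eq_mul, smul_eq_mul]

theorem stmt_15_general {M : Type*} [MetricSpace M] [Nonempty M]
    [MeasurableSpace M] [BorelSpace M]
    (f : Equiv.Perm M) (hf' : Continuous f.symm)
    (htop : ℝ) (hhtop : coverEntropy (⇑f) Set.univ = (htop : EReal))
    (μ : Measure M) [IsProbabilityMeasure μ] (herg : Ergodic f μ)
    {ι : Type*} [Fintype ι] [MeasurableSpace ι] [MeasurableSingletonClass ι]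
    (s : M → ι) (hs : Measurable s)
    (α : ℝ) (hα : 0 < α) (C : ℝ) (hC : 1 ≤ C)
    (M₁ : Set M) (hM₁ : MeasurableSet M₁) (T : ℕ) (hT : 1 ≤ T)
    (hcount₁ : ∀ x ∈ M₁,
      (Set.ncard {w : Fin T → ι | 0 < (μ[(cylinder (⇑f) s T w).indicator (1 : M → ℝ)|
        ⨆ n : ℕ, MeasurableSpace.comap (fun y => s ((⇑f.symm)^[n + 1] y)) ⊤]) x} : ℝ) ≤ C)
    (hcount₂ : ∀ x ∉ M₁,
      (Set.ncard {w : Fin T → ι | 0 < (μ[(cylinder (⇑f) s T w).indicator (1 : M → ℝ)|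
        ⨆ n : ℕ, MeasurableSpace.comap (fun y => s ((⇑f.symm)^[n + 1] y)) ⊤]) x} : ℝ)
        ≤ Real.exp ((htop + α) * T)) :
    relEntropy (⇑f) μ s ≤
        (μ M₁).toReal * Real.log C / T + (1 - (μ M₁).toReal) * (htop + α) ∧
      ∀ m₁ : ℝ, 0 < m₁ → m₁ ≤ (μ M₁).toReal →
        relEntropy (⇑f) μ s ≤ htop - m₁ * htop + α + Real.log C / T := by
  have hf := herg.toMeasurePreserving
  have hTpos : (0 : ℝ) < T := by exact_mod_cast hT
  have hW : ⨆ n : ℕ, MeasurableSpace.comap (fun y => s ((⇑f.symm)^[n + 1] y)) ⊤ ≤ ‹_› :=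
    iSup_le fun n => (hs.comp (hf'.measurable.iterate _)).comap_top_le
  simp_rw [cylinder_eq_preimage_itinerary] at hcount₁ hcount₂
  have hQT := measurable_itinerary hf.measurable hs T
  have hgibbs := ae_condPartitionEntropy_le_log (μ := μ) hW hQT
  have hint := integral_le_of_ae_le_of_ae_le_compl (integrable_condPartitionEntropy hW hQT) hM₁
    (hgibbs.mono fun x hx hxM => hx _ (hcount₁ x hxM))
    (hgibbs.mono fun x hx hxM => (hx _ (hcount₂ x hxM)).trans_eq (log_exp _))
  have hmain : relEntropy f μ s ≤
      (μ M₁).toReal * log C / T + (1 - (μ M₁).toReal) * (htop + α) := by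
    refine (relEntropy_le_integral_condPartitionEntropy hf hf'.measurable hs hT).trans ?_
    rw [div_le_iff₀ hTpos]
    refine hint.trans_eq ?_
    rw [measureReal_def]
    field_simp
  refine ⟨hmain, fun m₁ _ hm₁ => hmain.trans ?_⟩
  have hhtop0 : 0 ≤ htop := by
    exact_mod_cast hhtop ▸ coverEntropy_nonneg (⇑f) Set.univ_nonempty
  have hlogC : (μ M₁).toReal * log C / T ≤ log C / T := by
    rw [mul_div_assoc]
    exact mul_le_of_le_one_left (div_nonneg (log_nonneg hC) hTpos.le) measureReal_le_one
  linarith [mul_le_mul_of_nonneg_right hm₁ hhtop0,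
    mul_nonneg (ENNReal.toReal_nonneg (a := μ M₁)) hα.le]

/-- if, conditionally on the unstable σ-algebra `W = ⋁_{n≥1} fⁿQ`, at most
`C` cylinders of `Q^T` are charged at points of `M₁` and at most `e^{(h_top(f)+α)T}`
elsewhere, then `h(f,μ) ≤ μ(M₁)·(log C)/T + (1−μ(M₁))·(h_top(f)+α)`; in particular if
`μ(M₁) ≥ m₁` then `h(f,μ) ≤ h_top(f) − m₁·h_top(f) + α + (log C)/T`. -/
theorem stmt_15 {M : Type*} [MetricSpace M] [CompactSpace M] [Nonempty M]
    [MeasurableSpace M] [BorelSpace M]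
    (f : Equiv.Perm M) (hf : Continuous f) (hf' : Continuous f.symm)
    (htop : ℝ) (hhtop : coverEntropy (⇑f) Set.univ = (htop : EReal))
    (μ : Measure M) [IsProbabilityMeasure μ] (herg : Ergodic f μ)
    {ι : Type*} [Fintype ι] [MeasurableSpace ι] [MeasurableSingletonClass ι]
    (s : M → ι) (hs : Measurable s)
    -- `Q` computes the entropy of `μ` : `h(f,μ) = h(f,μ,Q)`, i.e. the relative entropy of
    -- any other finite measurable partition is at most that of `Q`
    (hgen : ∀ {κ : Type} [Fintype κ] [MeasurableSpace κ] (t : M → κ), Measurable t →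
      relEntropy (⇑f) μ t ≤ relEntropy (⇑f) μ s)
    (α : ℝ) (hα : 0 < α) (C : ℝ) (hC : 1 ≤ C)
    (M₁ : Set M) (hM₁ : MeasurableSet M₁) (T : ℕ) (hT : 1 ≤ T)
    (hcount₁ : ∀ x ∈ M₁,
      (Set.ncard {w : Fin T → ι | 0 < (μ[(cylinder (⇑f) s T w).indicator (1 : M → ℝ)|
        ⨆ n : ℕ, MeasurableSpace.comap (fun y => s ((⇑f.symm)^[n + 1] y)) ⊤]) x} : ℝ) ≤ C)
    (hcount₂ : ∀ x ∉ M₁,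
      (Set.ncard {w : Fin T → ι | 0 < (μ[(cylinder (⇑f) s T w).indicator (1 : M → ℝ)|
        ⨆ n : ℕ, MeasurableSpace.comap (fun y => s ((⇑f.symm)^[n + 1] y)) ⊤]) x} : ℝ)
        ≤ Real.exp ((htop + α) * T)) :
    relEntropy (⇑f) μ s ≤
        (μ M₁).toReal * Real.log C / T + (1 - (μ M₁).toReal) * (htop + α) ∧
      ∀ m₁ : ℝ, 0 < m₁ → m₁ ≤ (μ M₁).toReal →
        relEntropy (⇑f) μ s ≤ htop - m₁ * htop + α + Real.log C / T :=
  stmt_15_general f hf' htop hhtop μ herg s hs α hα C hC M₁ hM₁ T hT hcount₁ hcount₂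
end

section
/- Let P be a finite collection of pairwise disjoint open subsets of a compact metric space M with dense union, and suppose the total boundary ∂P := ⋃_{A∈P} ∂A is such that μ(∂P) = 0 for a given f-invariant probability measure μ lifted to two measures μ₁, μ₂ on Σ(f,P) via the coding map p. If p(A) = p(B) with A ≠ B in Σ(f,P), then there exists n ∈ ℤ with fⁿ(p(A)) ∈ ∂P. Consequently, if ν is an f-invariant measure with ν(∂P) = 0, then any two shift-invariant measures μ₁, μ₂ on Σ(f,P) with p_*μ₁ = p_*μ₂ = ν are equal. -/
/-!
Two codes of the same point differ at some time `n`, where `fⁿ` of the point lies in the closures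
of two disjoint open sets, hence on `∂P`. Conversely, if the orbit avoids `∂P`, then `fⁿ (p A)`
lies in the open set `P (A n)` itself, so `A n = i ↔ fⁿ (p A) ∈ P i`. As `ν` is `f`-invariant
with `ν ∂P = 0`, almost every orbit avoids `∂P`; so for `μ` with `p_* μ = ν` every cylinder is
`μ`-a.e. the `p`-preimage of a measurable set, and `μ` is determined by `ν` on cylinders.
-/

open MeasureTheory Set Function

namespace Equiv.Perm

variable {X : Type*} {f : Perm X}

theorem continuous_zpow_s16 [TopologicalSpace X] (hf : Continuous f) (hf' : Continuous f.symm)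
    (n : ℤ) : Continuous ⇑(f ^ n) := by
  cases n with
  | ofNat k => simpa [coe_pow] using hf.iterate k
  | negSucc k =>
    rw [zpow_negSucc, ← inv_pow, coe_pow]
    exact hf'.iterate (k + 1)

theorem measurePreserving_zpow [MeasurableSpace X] {μ : Measure X} (hf' : Measurable f.symm)
    (hμ : MeasurePreserving f μ μ) (n : ℤ) : MeasurePreserving ⇑(f ^ n) μ μ := by
  let e : X ≃ᵐ X := ⟨f, hμ.measurable, hf'⟩
  cases n with
  | ofNat k => simpa [coe_pow] using hμ.iterate k
  | negSucc k =>
    rw [zpow_negSucc, ← inv_pow, coe_pow]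
    exact (hμ.symm e).iterate (k + 1)

end Equiv.Perm

theorem mem_frontier_of_mem_closure_of_disjoint {X : Type*} [TopologicalSpace X] {U V : Set X}
    {x : X} (hU : IsOpen U) (hUV : Disjoint U V) (hxU : x ∈ closure U) (hxV : x ∈ closure V) :
    x ∈ frontier U := by
  rw [hU.frontier_eq]
  exact ⟨hxU, fun hx => disjoint_left.1 (hUV.symm.closure_left hU) hxV hx⟩

theorem eq_iff_mem_of_mem_closure_of_notMem_frontier {X ι : Type*} [TopologicalSpace X]
    {P : ι → Set X} (hopen : ∀ i, IsOpen (P i)) (hdisj : Pairwise (Disjoint on P)) {x : X}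
    {i j : ι} (hx : x ∈ closure (P i)) (hx' : x ∉ ⋃ k, frontier (P k)) : i = j ↔ x ∈ P j := by
  refine ⟨fun hij => ?_, fun hxj => ?_⟩
  · subst hij
    by_contra hxi
    exact hx' (mem_iUnion.2 ⟨i, (hopen i).frontier_eq ▸ ⟨hx, hxi⟩⟩)
  · by_contra hij
    exact hx' (mem_iUnion.2 ⟨j, mem_frontier_of_mem_closure_of_disjoint (hopen j)
      (hdisj (Ne.symm hij)) (subset_closure hxj) hx⟩)

namespace MeasureTheory

variable {δ ι X : Type*} [Countable ι] [MeasurableSpace ι] [MeasurableSpace X]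
  {p : (δ → ι) → X} {Q : δ → ι → Set X}

theorem measure_cylinder_eq_map_apply {μ : Measure (δ → ι)} (hp : AEMeasurable p μ)
    (hQ : ∀ n i, MeasurableSet (Q n i)) (hcoord : ∀ n i, {A | A n = i} =ᵐ[μ] p ⁻¹' Q n i)
    (s : Finset δ) (S : Set (s → ι)) :
    μ (cylinder s S) = μ.map p (⋃ y : S, ⋂ n : s, Q n (y.1 n)) := by
  have hcyl : cylinder s S = ⋃ y : S, ⋂ n : s, {A : δ → ι | A n = y.1 n} := by
    ext A
    simp only [mem_cylinder, mem_iUnion, mem_iInter, mem_ofPred_eq, Subtype.exists, exists_prop]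
    exact ⟨fun h => ⟨_, h, fun _ => rfl⟩, fun ⟨y, hy, h⟩ => (funext h : s.restrict A = y) ▸ hy⟩
  have hT : MeasurableSet (⋃ y : S, ⋂ n : s, Q n (y.1 n)) :=
    .iUnion fun y => .iInter fun n => hQ n (y.1 n)
  rw [Measure.map_apply_of_aemeasurable hp hT, hcyl]
  refine measure_congr ?_
  simp only [preimage_iUnion, preimage_iInter]
  exact .countable_iUnion fun y => .countable_iInter fun n => hcoord n (y.1 n)

theorem Measure.ext_of_map_eq_of_coord_ae_eq {μ₁ μ₂ : Measure (δ → ι)} [IsFiniteMeasure μ₁]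
    (hp₁ : AEMeasurable p μ₁) (hp₂ : AEMeasurable p μ₂) (hmap : μ₁.map p = μ₂.map p)
    (hQ : ∀ n i, MeasurableSet (Q n i))
    (h₁ : ∀ n i, {A | A n = i} =ᵐ[μ₁] p ⁻¹' Q n i)
    (h₂ : ∀ n i, {A | A n = i} =ᵐ[μ₂] p ⁻¹' Q n i) : μ₁ = μ₂ := by
  refine ext_of_generate_finite _ generateFrom_measurableCylinders.symm
    isPiSystem_measurableCylinders (fun t ht => ?_) ?_
  · obtain ⟨s, S, -, rfl⟩ := (mem_measurableCylinders t).1 ht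
    rw [measure_cylinder_eq_map_apply hp₁ hQ h₁, measure_cylinder_eq_map_apply hp₂ hQ h₂, hmap]
  · rw [← preimage_univ (f := p), ← Measure.map_apply_of_aemeasurable hp₁ .univ,
      ← Measure.map_apply_of_aemeasurable hp₂ .univ, hmap]

end MeasureTheory

theorem stmt_16_general {M : Type*} [MetricSpace M]
    [MeasurableSpace M] [BorelSpace M]
    (f : Equiv.Perm M) (hf : Continuous f) (hf' : Continuous f.symm)
    (ι : Type*) [Fintype ι] [MeasurableSpace ι]
    (P : ι → Set M)
    (hopen : ∀ i, IsOpen (P i))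
    (hdisj : ∀ i j, i ≠ j → Disjoint (P i) (P j))
    (Sig : Set (ℤ → ι))
    (p : (ℤ → ι) → M)
    (hp : ∀ A ∈ Sig, (⋂ n : ℤ, ⇑(f ^ n) ⁻¹' closure (P (A n))) = {p A})
    (σ : (ℤ → ι) → ℤ → ι) :
    (∀ A ∈ Sig, ∀ B ∈ Sig, p A = p B → A ≠ B →
      ∃ n : ℤ, (f ^ n) (p A) ∈ ⋃ i, frontier (P i)) ∧
    ∀ (ν : Measure M), IsProbabilityMeasure ν → ν.map f = ν →
      ν (⋃ i, frontier (P i)) = 0 →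
      ∀ μ₁ μ₂ : Measure (ℤ → ι), IsProbabilityMeasure μ₁ → IsProbabilityMeasure μ₂ →
        μ₁.map σ = μ₁ → μ₂.map σ = μ₂ → μ₁ Sigᶜ = 0 → μ₂ Sigᶜ = 0 →
        μ₁.map p = ν → μ₂.map p = ν → μ₁ = μ₂ := by
  have hcoding : ∀ A ∈ Sig, ∀ n : ℤ, (f ^ n) (p A) ∈ closure (P (A n)) := fun A hA =>
    mem_iInter.1 ((hp A hA).symm ▸ mem_singleton (p A))
  refine ⟨fun A hA B hB hAB hne => ?_,
    fun ν hν hνf hνB μ₁ μ₂ _ _ _ _ hS₁ hS₂ hm₁ hm₂ => ?_⟩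
  · obtain ⟨n, hn⟩ := Function.ne_iff.1 hne
    exact ⟨n, mem_iUnion.2 ⟨A n, mem_frontier_of_mem_closure_of_disjoint (hopen _)
      (hdisj _ _ hn) (hcoding A hA n) (hAB ▸ hcoding B hB n)⟩⟩
  have horbit : ∀ᵐ x ∂ν, ∀ n : ℤ, (f ^ n) x ∉ ⋃ i, frontier (P i) :=
    ae_all_iff.2 fun n => (Equiv.Perm.measurePreserving_zpow hf'.measurable
      ⟨hf.measurable, hνf⟩ n).quasiMeasurePreserving.ae (measure_eq_zero_iff_ae_notMem.1 hνB)
  have hcoord : ∀ μ : Measure (ℤ → ι), μ Sigᶜ = 0 → μ.map p = ν →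
      AEMeasurable p μ ∧ ∀ n i, {A | A n = i} =ᵐ[μ] p ⁻¹' (⇑(f ^ n) ⁻¹' P i) := by
    intro μ hS hm
    have hpμ : AEMeasurable p μ := .of_map_ne_zero (hm ▸ hν.ne_zero)
    refine ⟨hpμ, fun n i => Filter.eventuallyEq_set.2 ?_⟩
    filter_upwards [mem_ae_iff.2 hS, ae_of_ae_map hpμ (hm ▸ horbit)] with A hA hA'
    exact eq_iff_mem_of_mem_closure_of_notMem_frontier hopen (fun i j => hdisj i j)
      (hcoding A hA n) (hA' n)
  obtain ⟨hp₁, h₁⟩ := hcoord μ₁ hS₁ hm₁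
  obtain ⟨hp₂, h₂⟩ := hcoord μ₂ hS₂ hm₂
  exact Measure.ext_of_map_eq_of_coord_ae_eq hp₁ hp₂ (hm₁.trans hm₂.symm)
    (fun n i => ((hopen i).preimage (Equiv.Perm.continuous_zpow_s16 hf hf' n)).measurableSet) h₁ h₂

/-- if two distinct sequences of `Σ(f,P)` have the same image under the
coding map `p`, then some iterate of the image point lies on the total boundary
`∂P = ⋃ᵢ ∂(P i)`. Consequently, two shift-invariant measures on `Σ(f,P)` projecting to the
same `f`-invariant measure `ν` with `ν(∂P) = 0` are equal. -/
theorem stmt_16 {M : Type*} [MetricSpace M] [CompactSpace M]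
    [MeasurableSpace M] [BorelSpace M]
    (f : Equiv.Perm M) (hf : Continuous f) (hf' : Continuous f.symm)
    (ι : Type*) [Fintype ι] [MeasurableSpace ι] [MeasurableSingletonClass ι]
    (P : ι → Set M)
    (hopen : ∀ i, IsOpen (P i))
    (hdisj : ∀ i j, i ≠ j → Disjoint (P i) (P j))
    (hdense : Dense (⋃ i, P i))
    (Sig : Set (ℤ → ι))
    (hSig : Sig = {A : ℤ → ι | ∀ n m : ℤ, n ≤ m →
      (⋂ k ∈ Set.Icc n m, (⇑(f ^ (k - n)) ⁻¹' P (A k))).Nonempty})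
    (p : (ℤ → ι) → M)
    (hp : ∀ A ∈ Sig, (⋂ n : ℤ, ⇑(f ^ n) ⁻¹' closure (P (A n))) = {p A})
    (σ : (ℤ → ι) → ℤ → ι) (hσ : σ = fun A n => A (n + 1)) :
    (∀ A ∈ Sig, ∀ B ∈ Sig, p A = p B → A ≠ B →
      ∃ n : ℤ, (f ^ n) (p A) ∈ ⋃ i, frontier (P i)) ∧
    ∀ (ν : Measure M), IsProbabilityMeasure ν → ν.map f = ν →
      ν (⋃ i, frontier (P i)) = 0 →
      ∀ μ₁ μ₂ : Measure (ℤ → ι), IsProbabilityMeasure μ₁ → IsProbabilityMeasure μ₂ →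
        μ₁.map σ = μ₁ → μ₂.map σ = μ₂ → μ₁ Sigᶜ = 0 → μ₂ Sigᶜ = 0 →
        μ₁.map p = ν → μ₂.map p = ν → μ₁ = μ₂ :=
  stmt_16_general f hf hf' ι P hopen hdisj Sig p hp σ
end
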